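/- For every natural number L, the alternating sum over all integers j of (-1)^j q^(2j²+2j) times the Gaussian binomial coefficient (2L+1 choose L-2j) in base q equals q^L times the product (-q;q²)_L = q^L ∏_{k=1}^{L} (1+q^(2k-1)). -/
import Mathlib


open LaurentPolynomial Finset

noncomputable section

/-- Gaussian binomial coefficient with natural indices, in base `x`, defined by the
`q`-Pascal recurrence `[n+1, k+1] = [n, k] + x^(k+1) * [n, k+1]`.  It vanishes for `k > n`. -/
def gaussAux (x : LaurentPolynomial ℤ) : ℕ → ℕ → LaurentPolynomial ℤ
  | _, 0 => 1
  | 0, _ + 1 => 0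
  | n + 1, k + 1 => gaussAux x n k + x ^ (k + 1) * gaussAux x n (k + 1)

/-- The Gaussian binomial coefficient `[n choose k]` in base `x`, for integer indices:
it is zero when `n < 0` or `k < 0` (and, by `gaussAux`, also when `k > n`). -/
def qbin (x : LaurentPolynomial ℤ) (n k : ℤ) : LaurentPolynomial ℤ :=
  if 0 ≤ n ∧ 0 ≤ k then gaussAux x n.toNat k.toNat else 0

/-- `(-1)^j` for an integer `j`, as a Laurent polynomial. -/
def m1 (j : ℤ) : LaurentPolynomial ℤ := ((((-1 : ℤˣ) ^ j : ℤˣ) : ℤ) : LaurentPolynomial ℤ)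

-- basic gaussAux lemmas
lemma gaussAux_zero (x : LaurentPolynomial ℤ) (n : ℕ) : gaussAux x n 0 = 1 := by
  cases n <;> rfl

lemma gaussAux_of_lt (x : LaurentPolynomial ℤ) : ∀ n k : ℕ, n < k → gaussAux x n k = 0 := by
  intro n
  induction n with
  | zero => intro k hk; match k, hk with | k+1, _ => rfl
  | succ n ih =>
    intro k hk
    match k, hk with
    | k+1, hk =>
      show gaussAux x n k + x ^ (k + 1) * gaussAux x n (k + 1) = 0
      rw [ih k (by omega), ih (k+1) (by omega), mul_zero, add_zero]

lemma gaussAux_self (x : LaurentPolynomial ℤ) : ∀ n : ℕ, gaussAux x n n = 1 := by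
  intro n
  induction n with
  | zero => rfl
  | succ n ih =>
    show gaussAux x n n + x ^ (n + 1) * gaussAux x n (n + 1) = 1
    rw [ih, gaussAux_of_lt x n (n+1) (by omega), mul_zero, add_zero]

-- second Pascal rule
lemma gaussAux_pascalB (x : LaurentPolynomial ℤ) :
    ∀ n k : ℕ, k ≤ n →
      gaussAux x (n+1) (k+1) = x ^ (n - k) * gaussAux x n k + gaussAux x n (k+1) := by
  intro n
  induction n with
  | zero =>
    intro k hk
    interval_cases k
    simp [gaussAux]
  | succ n ih =>
    intro k hk
    rcases Nat.lt_or_ge k (n+1) with h | h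
    · have hkn : k ≤ n := by omega
      cases k with
      | zero =>
        have h1 := ih 0 (Nat.zero_le n)
        simp only [Nat.sub_zero, gaussAux_zero, mul_one] at h1
        have h2 : gaussAux x (n+1) 1 = 1 + x ^ 1 * gaussAux x n 1 := by
          rw [show gaussAux x (n+1) 1 = gaussAux x n 0 + x^1 * gaussAux x n 1 from rfl,
            gaussAux_zero]
        have key : 1 + x ^ 1 * gaussAux x n 1 = x ^ n + gaussAux x n 1 := h2.symm.trans h1
        have h3 : gaussAux x (n+2) 1 = 1 + x ^ 1 * gaussAux x (n+1) 1 := by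
          rw [show gaussAux x (n+2) 1 = gaussAux x (n+1) 0 + x^1 * gaussAux x (n+1) 1 from rfl,
            gaussAux_zero]
        show gaussAux x (n+2) 1 = x ^ (n+1-0) * gaussAux x (n+1) 0 + gaussAux x (n+1) 1
        rw [h3, h1, Nat.sub_zero, gaussAux_zero, mul_one, pow_succ]
        linear_combination key
      | succ k =>
        have hk2 : k + 1 ≤ n := hkn
        have d1 : gaussAux x (n+1) (k+1) = gaussAux x n k + x^(k+1) * gaussAux x n (k+1) := rfl
        have d2 : gaussAux x (n+1) (k+2) = gaussAux x n (k+1) + x^(k+2) * gaussAux x n (k+2) := rfl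
        have hkrel : gaussAux x n k + x^(k+1) * gaussAux x n (k+1)
            = x^(n-k) * gaussAux x n k + gaussAux x n (k+1) := by
          rw [← d1]; exact ih k (by omega)
        have e1 : (x:LaurentPolynomial ℤ)^(n-(k+1)) * x^(k+2) = x^(n-k) * x^(k+1) := by
          rw [← pow_add, ← pow_add]; congr 1; omega
        calc gaussAux x (n+2) (k+2)
            = gaussAux x (n+1) (k+1) + x^(k+2) * gaussAux x (n+1) (k+2) := rfl
          _ = gaussAux x (n+1) (k+1)
              + x^(k+2) * (x^(n-(k+1)) * gaussAux x n (k+1) + gaussAux x n (k+2)) := by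
              rw [ih (k+1) hk2]
          _ = x^(n+1-(k+1)) * gaussAux x (n+1) (k+1) + gaussAux x (n+1) (k+2) := by
              rw [d1, d2, show n+1-(k+1) = n-k by omega]
              linear_combination hkrel + gaussAux x n (k+1) * e1
    · have hk' : k = n + 1 := by omega
      subst hk'
      rw [show gaussAux x (n+2) (n+2) = gaussAux x (n+1+1) (n+1+1) from rfl,
        gaussAux_self, gaussAux_self, gaussAux_of_lt x (n+1) (n+2) (by omega),
        Nat.sub_self, pow_zero, one_mul, add_zero]

lemma qbin_neg_right (x : LaurentPolynomial ℤ) (n k : ℤ) (hk : k < 0) : qbin x n k = 0 := by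
  simp [qbin, not_le.2 hk]

lemma qbin_of_gt (x : LaurentPolynomial ℤ) (n k : ℤ) (h : n < k) : qbin x n k = 0 := by
  unfold qbin
  split
  · next hc =>
    exact gaussAux_of_lt x _ _ (by omega)
  · rfl

lemma qbin_zero_right (x : LaurentPolynomial ℤ) (n : ℤ) (hn : 0 ≤ n) : qbin x n 0 = 1 := by
  simp [qbin, hn, gaussAux_zero]

lemma T_toNat (k : ℤ) (hk : 0 ≤ k) : (T 1 : LaurentPolynomial ℤ) ^ k.toNat = T k := by
  rw [T_pow, mul_one, Int.toNat_of_nonneg hk]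

lemma qbin_pascalA (n k : ℤ) (hn : 0 ≤ n) :
    qbin (T 1) (n+1) k = qbin (T 1) n (k-1) + T k * qbin (T 1) n k := by
  rcases lt_trichotomy k 0 with hk | hk | hk
  · rw [qbin_neg_right _ _ _ hk, qbin_neg_right _ _ _ (by omega),
      qbin_neg_right _ _ _ hk, mul_zero, add_zero]
  · subst hk
    rw [qbin_zero_right _ _ (by omega), qbin_zero_right _ _ hn,
      qbin_neg_right _ _ _ (by omega), T_zero, one_mul, zero_add]
  · have h1 : (0:ℤ) ≤ n + 1 := by omega
    have h2 : (0:ℤ) ≤ k - 1 := by omega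
    rw [qbin, qbin, qbin, if_pos ⟨h1, by omega⟩, if_pos ⟨hn, by omega⟩, if_pos ⟨hn, by omega⟩]
    have e1 : (n+1).toNat = n.toNat + 1 := by omega
    have e2 : k.toNat = (k-1).toNat + 1 := by omega
    rw [e1, e2, show gaussAux (T 1) (n.toNat + 1) ((k-1).toNat + 1)
        = gaussAux (T 1) n.toNat (k-1).toNat
          + (T 1)^((k-1).toNat + 1) * gaussAux (T 1) n.toNat ((k-1).toNat + 1) from rfl]
    rw [show (k-1).toNat + 1 = k.toNat by omega, T_toNat k (by omega)]

lemma qbin_pascalB (n k : ℤ) (hn : 0 ≤ n) :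
    qbin (T 1) (n+1) k = T (n+1-k) * qbin (T 1) n (k-1) + qbin (T 1) n k := by
  rcases lt_trichotomy k 0 with hk | hk | hk
  · rw [qbin_neg_right _ _ _ hk, qbin_neg_right _ _ _ (by omega),
      qbin_neg_right _ _ _ hk, mul_zero, add_zero]
  · subst hk
    rw [qbin_zero_right _ _ (by omega), qbin_zero_right _ _ hn,
      qbin_neg_right _ _ _ (by omega), mul_zero, zero_add]
  · rcases le_or_gt k (n+1) with hkn | hkn
    · have h2 : (0:ℤ) ≤ k - 1 := by omega
      rw [qbin, qbin, qbin, if_pos ⟨by omega, by omega⟩, if_pos ⟨hn, by omega⟩,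
        if_pos ⟨hn, by omega⟩]
      have e1 : (n+1).toNat = n.toNat + 1 := by omega
      have e2 : k.toNat = (k-1).toNat + 1 := by omega
      rw [e1, e2, gaussAux_pascalB (T 1) n.toNat (k-1).toNat (by omega)]
      rw [show n.toNat - (k-1).toNat = (n+1-k).toNat by omega, T_toNat _ (by omega)]
    · rw [qbin_of_gt _ _ _ hkn, qbin_of_gt _ _ _ (by omega), qbin_of_gt _ _ _ (by omega),
        mul_zero, add_zero]

lemma qbin_double (n k : ℤ) (hn : 1 ≤ n) :
    qbin (T 1) (n+1) k = T (n+1-k) * qbin (T 1) (n-1) (k-2)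
      + (1 + T n) * qbin (T 1) (n-1) (k-1) + T k * qbin (T 1) (n-1) k := by
  have h0 : (0:ℤ) ≤ n := by omega
  have h1 : (0:ℤ) ≤ n - 1 := by omega
  have hb : ∀ m : ℤ, qbin (T 1) n m = T (n-m) * qbin (T 1) (n-1) (m-1) + qbin (T 1) (n-1) m := by
    intro m
    have := qbin_pascalB (n-1) m h1
    rw [show n - 1 + 1 = n by ring] at this
    rw [this]
  rw [qbin_pascalA n k h0, hb (k-1), hb k]
  have e : (T k : LaurentPolynomial ℤ) * T (n - k) = T n := by
    rw [← T_add]; congr 1; ring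
  rw [show k - 1 - 1 = k - 2 by ring, show n - (k-1) = n+1-k by ring]
  linear_combination (qbin (T 1) (n-1) (k-1)) * e

lemma m1_add_one (j : ℤ) : m1 (j+1) = - m1 j := by
  unfold m1
  rw [zpow_add_one]
  push_cast
  ring

lemma m1_zero : m1 0 = 1 := by simp [m1]

/-- The general term family. -/
def Gt (n c d a : ℤ) (j : ℤ) : LaurentPolynomial ℤ :=
  m1 j * T (2*j^2 + c*j + d) * qbin (T 1) n (a - 2*j)

lemma Gt_eq_zero {n a : ℤ} (c d : ℤ) {j : ℤ} (h : a - 2*j < 0 ∨ n < a - 2*j) :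
    Gt n c d a j = 0 := by
  rcases h with h | h
  · rw [Gt, qbin_neg_right _ _ _ h, mul_zero]
  · rw [Gt, qbin_of_gt _ _ _ h, mul_zero]

lemma sum_Gt_congr {n a lo hi lo' hi' : ℤ} (c d : ℤ)
    (h1 : 2*lo ≤ a - n) (h2 : a ≤ 2*hi) (h1' : 2*lo' ≤ a - n) (h2' : a ≤ 2*hi') :
    ∑ j ∈ Finset.Icc lo hi, Gt n c d a j = ∑ j ∈ Finset.Icc lo' hi', Gt n c d a j := by
  have key : ∀ lo₀ hi₀ : ℤ, min lo lo' ≤ lo₀ → hi₀ ≤ max hi hi' → 2*lo₀ ≤ a - n → a ≤ 2*hi₀ →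
      ∑ j ∈ Finset.Icc lo₀ hi₀, Gt n c d a j
        = ∑ j ∈ Finset.Icc (min lo lo') (max hi hi'), Gt n c d a j := by
    intro lo₀ hi₀ hm hM ha hb
    apply Finset.sum_subset (Finset.Icc_subset_Icc hm hM)
    intro j hj hj'
    rw [Finset.mem_Icc] at hj hj'
    apply Gt_eq_zero
    omega
  rw [key lo hi (min_le_left _ _) (le_max_left _ _) h1 h2,
    key lo' hi' (min_le_right _ _) (le_max_right _ _) h1' h2']

lemma Gt_succ (n c d a j : ℤ) : Gt n c d a (j+1) = - Gt n (c+4) (c+d+2) (a-2) j := by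
  unfold Gt
  rw [m1_add_one, show 2*(j+1)^2 + c*(j+1) + d = 2*j^2 + (c+4)*j + (c+d+2) by ring,
    show a - 2*(j+1) = a - 2 - 2*j by ring]
  ring

lemma sum_Gt_shift (n c d a lo hi : ℤ) :
    ∑ j ∈ Finset.Icc lo hi, Gt n c d a j
      = - ∑ j ∈ Finset.Icc (lo-1) (hi-1), Gt n (c+4) (c+d+2) (a-2) j := by
  have : Finset.Icc lo hi = (Finset.Icc (lo-1) (hi-1)).map (addRightEmbedding 1) := by
    rw [Finset.map_add_right_Icc]
    congr 1 <;> ring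
  rw [this, Finset.sum_map, ← Finset.sum_neg_distrib]
  apply Finset.sum_congr rfl
  intro j _
  show Gt n c d a (j+1) = - Gt n (c+4) (c+d+2) (a-2) j
  exact Gt_succ n c d a j

lemma Gt_factor (n c d a j : ℤ) : Gt n c d a j = T d * Gt n c 0 a j := by
  unfold Gt
  rw [show 2*j^2 + c*j + d = d + (2*j^2 + c*j + 0) by ring, T_add]
  ring

lemma Gt_pascal (n c d a : ℤ) (hn : 1 ≤ n) (j : ℤ) :
    Gt (n+1) c d a j = Gt (n-1) (c+2) (d+n+1-a) (a-2) j
      + (1 + T n) * Gt (n-1) c d (a-1) j + Gt (n-1) (c-2) (d+a) a j := by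
  unfold Gt
  rw [qbin_double n (a - 2*j) hn]
  rw [show a - 2*j - 2 = a - 2 - 2*j by ring, show a - 2*j - 1 = a - 1 - 2*j by ring]
  have e1 : (T (2*j^2 + c*j + d) : LaurentPolynomial ℤ) * T (n+1-(a-2*j))
      = T (2*j^2 + (c+2)*j + (d+n+1-a)) := by
    rw [← T_add]; congr 1; ring
  have e2 : (T (2*j^2 + c*j + d) : LaurentPolynomial ℤ) * T (a-2*j)
      = T (2*j^2 + (c-2)*j + (d+a)) := by
    rw [← T_add]; congr 1; ring
  calc m1 j * T (2*j^2 + c*j + d) * (T (n+1-(a-2*j)) * qbin (T 1) (n-1) (a-2-2*j)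
        + (1 + T n) * qbin (T 1) (n-1) (a-1-2*j) + T (a-2*j) * qbin (T 1) (n-1) (a-2*j))
      = m1 j * (T (2*j^2 + c*j + d) * T (n+1-(a-2*j))) * qbin (T 1) (n-1) (a-2-2*j)
        + (1 + T n) * (m1 j * T (2*j^2 + c*j + d) * qbin (T 1) (n-1) (a-1-2*j))
        + m1 j * (T (2*j^2 + c*j + d) * T (a-2*j)) * qbin (T 1) (n-1) (a-2*j) := by ring
    _ = _ := by rw [e1, e2]

lemma sum_Gt_shift' (n c d a c' d' a' lo hi lo' hi' : ℤ)
    (hc : c' = c+4) (hd : d' = c+d+2) (ha : a' = a-2) (hlo : lo' = lo-1) (hhi : hi' = hi-1) :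
    ∑ j ∈ Finset.Icc lo hi, Gt n c d a j = - ∑ j ∈ Finset.Icc lo' hi', Gt n c' d' a' j := by
  subst hc hd ha hlo hhi
  exact sum_Gt_shift n c d a lo hi

lemma sum_Gt_factor (n c d a lo hi : ℤ) :
    ∑ j ∈ Finset.Icc lo hi, Gt n c d a j = T d * ∑ j ∈ Finset.Icc lo hi, Gt n c 0 a j := by
  rw [Finset.mul_sum]
  exact Finset.sum_congr rfl fun j _ => Gt_factor n c d a j

lemma Gt_pascal' (n N c d a n' c1 d1 a1 c2 d2 a2 aa : ℤ) (hn : 1 ≤ n)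
    (hN : N = n+1) (h0 : n' = n-1) (h1 : c1 = c+2) (h2 : d1 = d+n+1-a) (h3 : a1 = a-2)
    (h4 : c2 = c-2) (h5 : d2 = d+a) (h6 : aa = a-1) (h7 : a2 = a) (j : ℤ) :
    Gt N c d a j = Gt n' c1 d1 a1 j + (1 + T n) * Gt n' c d aa j + Gt n' c2 d2 a2 j := by
  subst hN h0 h1 h2 h3 h4 h5 h6 h7
  exact Gt_pascal _ _ _ _ hn j

lemma R1 (L : ℕ) :
    ∑ j ∈ Finset.Icc (-(L:ℤ)-3) ((L:ℤ)+3), Gt (2*(L:ℤ)+3) 2 0 ((L:ℤ)+1) j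
      = (1 + T (2*(L:ℤ)+2))
          * ∑ j ∈ Finset.Icc (-(L:ℤ)-3) ((L:ℤ)+3), Gt (2*(L:ℤ)+1) 2 0 (L:ℤ) j
        + (T ((L:ℤ)+1) - T (L:ℤ))
          * ∑ j ∈ Finset.Icc (-(L:ℤ)-3) ((L:ℤ)+3), Gt (2*(L:ℤ)+1) 0 0 ((L:ℤ)+1) j := by
  have step1 : ∑ j ∈ Finset.Icc (-(L:ℤ)-3) ((L:ℤ)+3), Gt (2*(L:ℤ)+3) 2 0 ((L:ℤ)+1) j
      = ∑ j ∈ Finset.Icc (-(L:ℤ)-3) ((L:ℤ)+3),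
          (Gt (2*(L:ℤ)+1) 4 ((L:ℤ)+2) ((L:ℤ)-1) j
            + (1 + T (2*(L:ℤ)+2)) * Gt (2*(L:ℤ)+1) 2 0 (L:ℤ) j
            + Gt (2*(L:ℤ)+1) 0 ((L:ℤ)+1) ((L:ℤ)+1) j) :=
    Finset.sum_congr rfl fun j _ =>
      Gt_pascal' (2*(L:ℤ)+2) (2*(L:ℤ)+3) 2 0 ((L:ℤ)+1) (2*(L:ℤ)+1) 4 ((L:ℤ)+2) ((L:ℤ)-1)
        0 ((L:ℤ)+1) ((L:ℤ)+1) (L:ℤ) (by omega) (by ring) (by ring) (by ring) (by ring)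
        (by ring) (by ring) (by ring) (by ring) (by ring) j
  rw [step1, Finset.sum_add_distrib, Finset.sum_add_distrib, ← Finset.mul_sum]
  have hA : ∑ j ∈ Finset.Icc (-(L:ℤ)-3) ((L:ℤ)+3), Gt (2*(L:ℤ)+1) 4 ((L:ℤ)+2) ((L:ℤ)-1) j
      = - (T (L:ℤ) * ∑ j ∈ Finset.Icc (-(L:ℤ)-3) ((L:ℤ)+3), Gt (2*(L:ℤ)+1) 0 0 ((L:ℤ)+1) j) := by
    have hs := sum_Gt_shift' (2*(L:ℤ)+1) 0 (L:ℤ) ((L:ℤ)+1) 4 ((L:ℤ)+2) ((L:ℤ)-1)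
      (-(L:ℤ)-2) ((L:ℤ)+4) (-(L:ℤ)-3) ((L:ℤ)+3)
      (by ring) (by ring) (by ring) (by ring) (by ring)
    have hcongr : ∑ j ∈ Finset.Icc (-(L:ℤ)-2) ((L:ℤ)+4), Gt (2*(L:ℤ)+1) 0 (L:ℤ) ((L:ℤ)+1) j
        = ∑ j ∈ Finset.Icc (-(L:ℤ)-3) ((L:ℤ)+3), Gt (2*(L:ℤ)+1) 0 (L:ℤ) ((L:ℤ)+1) j :=
      sum_Gt_congr 0 (L:ℤ) (by omega) (by omega) (by omega) (by omega)
    rw [hcongr] at hs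
    rw [sum_Gt_factor (2*(L:ℤ)+1) 0 (L:ℤ) ((L:ℤ)+1) (-(L:ℤ)-3) ((L:ℤ)+3)] at hs
    linear_combination hs
  have hC : ∑ j ∈ Finset.Icc (-(L:ℤ)-3) ((L:ℤ)+3), Gt (2*(L:ℤ)+1) 0 ((L:ℤ)+1) ((L:ℤ)+1) j
      = T ((L:ℤ)+1) * ∑ j ∈ Finset.Icc (-(L:ℤ)-3) ((L:ℤ)+3), Gt (2*(L:ℤ)+1) 0 0 ((L:ℤ)+1) j :=
    sum_Gt_factor _ _ _ _ _ _
  rw [hA, hC]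
  ring

lemma R2 (L : ℕ) :
    ∑ j ∈ Finset.Icc (-(L:ℤ)-3) ((L:ℤ)+3), Gt (2*(L:ℤ)+3) 0 0 ((L:ℤ)+2) j
      = (1 + T (2*(L:ℤ)+2))
          * ∑ j ∈ Finset.Icc (-(L:ℤ)-3) ((L:ℤ)+3), Gt (2*(L:ℤ)+1) 0 0 ((L:ℤ)+1) j
        - (T ((L:ℤ)+2) - T ((L:ℤ)+1))
          * ∑ j ∈ Finset.Icc (-(L:ℤ)-3) ((L:ℤ)+3), Gt (2*(L:ℤ)+1) 2 0 (L:ℤ) j := by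
  have step1 : ∑ j ∈ Finset.Icc (-(L:ℤ)-3) ((L:ℤ)+3), Gt (2*(L:ℤ)+3) 0 0 ((L:ℤ)+2) j
      = ∑ j ∈ Finset.Icc (-(L:ℤ)-3) ((L:ℤ)+3),
          (Gt (2*(L:ℤ)+1) 2 ((L:ℤ)+1) (L:ℤ) j
            + (1 + T (2*(L:ℤ)+2)) * Gt (2*(L:ℤ)+1) 0 0 ((L:ℤ)+1) j
            + Gt (2*(L:ℤ)+1) (-2) ((L:ℤ)+2) ((L:ℤ)+2) j) :=
    Finset.sum_congr rfl fun j _ =>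
      Gt_pascal' (2*(L:ℤ)+2) (2*(L:ℤ)+3) 0 0 ((L:ℤ)+2) (2*(L:ℤ)+1) 2 ((L:ℤ)+1) (L:ℤ)
        (-2) ((L:ℤ)+2) ((L:ℤ)+2) ((L:ℤ)+1) (by omega) (by ring) (by ring) (by ring)
        (by ring) (by ring) (by ring) (by ring) (by ring) (by ring) j
  rw [step1, Finset.sum_add_distrib, Finset.sum_add_distrib, ← Finset.mul_sum]
  -- first sum equals the negated (-2, L+1, L+2) family sum
  have h1 : ∑ j ∈ Finset.Icc (-(L:ℤ)-3) ((L:ℤ)+3), Gt (2*(L:ℤ)+1) 2 ((L:ℤ)+1) (L:ℤ) j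
      = - ∑ j ∈ Finset.Icc (-(L:ℤ)-3) ((L:ℤ)+3), Gt (2*(L:ℤ)+1) (-2) ((L:ℤ)+1) ((L:ℤ)+2) j := by
    have hs := sum_Gt_shift' (2*(L:ℤ)+1) (-2) ((L:ℤ)+1) ((L:ℤ)+2) 2 ((L:ℤ)+1) (L:ℤ)
      (-(L:ℤ)-2) ((L:ℤ)+4) (-(L:ℤ)-3) ((L:ℤ)+3)
      (by ring) (by ring) (by ring) (by ring) (by ring)
    have hcongr : ∑ j ∈ Finset.Icc (-(L:ℤ)-2) ((L:ℤ)+4), Gt (2*(L:ℤ)+1) (-2) ((L:ℤ)+1) ((L:ℤ)+2) j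
        = ∑ j ∈ Finset.Icc (-(L:ℤ)-3) ((L:ℤ)+3), Gt (2*(L:ℤ)+1) (-2) ((L:ℤ)+1) ((L:ℤ)+2) j :=
      sum_Gt_congr (-2) ((L:ℤ)+1) (by omega) (by omega) (by omega) (by omega)
    rw [hcongr] at hs
    linear_combination hs
  -- the (-2, _, L+2) family sums via factoring and one more shift
  have hX : ∑ j ∈ Finset.Icc (-(L:ℤ)-3) ((L:ℤ)+3), Gt (2*(L:ℤ)+1) (-2) 0 ((L:ℤ)+2) j
      = - ∑ j ∈ Finset.Icc (-(L:ℤ)-3) ((L:ℤ)+3), Gt (2*(L:ℤ)+1) 2 0 (L:ℤ) j := by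
    have hs := sum_Gt_shift' (2*(L:ℤ)+1) (-2) 0 ((L:ℤ)+2) 2 0 (L:ℤ)
      (-(L:ℤ)-3) ((L:ℤ)+3) (-(L:ℤ)-4) ((L:ℤ)+2)
      (by ring) (by ring) (by ring) (by ring) (by ring)
    have hcongr : ∑ j ∈ Finset.Icc (-(L:ℤ)-4) ((L:ℤ)+2), Gt (2*(L:ℤ)+1) 2 0 (L:ℤ) j
        = ∑ j ∈ Finset.Icc (-(L:ℤ)-3) ((L:ℤ)+3), Gt (2*(L:ℤ)+1) 2 0 (L:ℤ) j :=
      sum_Gt_congr 2 0 (by omega) (by omega) (by omega) (by omega)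
    rw [hcongr] at hs
    linear_combination hs
  rw [h1, sum_Gt_factor (2*(L:ℤ)+1) (-2) ((L:ℤ)+1) ((L:ℤ)+2) (-(L:ℤ)-3) ((L:ℤ)+3),
    sum_Gt_factor (2*(L:ℤ)+1) (-2) ((L:ℤ)+2) ((L:ℤ)+2) (-(L:ℤ)-3) ((L:ℤ)+3), hX]
  ring

lemma qbin_diag (x : LaurentPolynomial ℤ) (n : ℤ) (hn : 0 ≤ n) : qbin x n n = 1 := by
  unfold qbin
  rw [if_pos (And.intro hn hn)]
  exact gaussAux_self x _

lemma base1 : ∑ j ∈ Finset.Icc (-3 : ℤ) 3, Gt 1 2 0 0 j = 1 := by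
  rw [sum_Gt_congr 2 0 (n := 1) (a := 0) (by omega) (by omega) (by omega) (by omega)
    (lo' := -1) (hi' := 0)]
  have : Finset.Icc (-1 : ℤ) 0 = {-1, 0} := rfl
  rw [this, Finset.sum_insert (by decide), Finset.sum_singleton,
    Gt_eq_zero (n := 1) (a := 0) 2 0 (j := -1) (by omega), zero_add]
  have h0 : Gt 1 2 0 0 0 = 1 := by
    rw [Gt]
    norm_num [m1_zero, T_zero]
    rw [qbin_zero_right _ 1 (by omega)]
  rw [h0]

lemma base2 : ∑ j ∈ Finset.Icc (-3 : ℤ) 3, Gt 1 0 0 1 j = 1 := by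
  rw [sum_Gt_congr 0 0 (n := 1) (a := 1) (by omega) (by omega) (by omega) (by omega)
    (lo' := 0) (hi' := 1)]
  have : Finset.Icc (0 : ℤ) 1 = {0, 1} := rfl
  rw [this, Finset.sum_insert (by decide), Finset.sum_singleton,
    Gt_eq_zero (n := 1) (a := 1) 0 0 (j := 1) (by omega), add_zero]
  have h0 : Gt 1 0 0 1 0 = 1 := by
    rw [Gt]
    norm_num [m1_zero, T_zero]
    rw [qbin_diag _ 1 (by omega)]
  rw [h0]

lemma key (L : ℕ) :
    (∑ j ∈ Finset.Icc (-(L:ℤ)-3) ((L:ℤ)+3), Gt (2*(L:ℤ)+1) 2 0 (L:ℤ) j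
       = T (L:ℤ) * ∏ k ∈ Finset.Icc 1 L, (1 + T (2*(k:ℤ)-1)))
    ∧ (∑ j ∈ Finset.Icc (-(L:ℤ)-3) ((L:ℤ)+3), Gt (2*(L:ℤ)+1) 0 0 ((L:ℤ)+1) j
       = ∏ k ∈ Finset.Icc 1 L, (1 + T (2*(k:ℤ)-1))) := by
  induction L with
  | zero =>
    constructor
    · have h1 : Finset.Icc 1 0 = (∅ : Finset ℕ) := rfl
      simp only [Nat.cast_zero, h1, Finset.prod_empty, mul_one, T_zero, one_mul]
      rw [show (-(0:ℤ)-3) = -3 by ring, show ((0:ℤ)+3) = 3 by ring,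
        show (2*(0:ℤ)+1) = 1 by ring]
      exact base1
    · have h1 : Finset.Icc 1 0 = (∅ : Finset ℕ) := rfl
      simp only [Nat.cast_zero, h1, Finset.prod_empty]
      rw [show (-(0:ℤ)-3) = -3 by ring, show ((0:ℤ)+3) = 3 by ring,
        show (2*(0:ℤ)+1) = 1 by ring, show ((0:ℤ)+1) = 1 by ring]
      exact base2
  | succ L ih =>
    obtain ⟨ih1, ih2⟩ := ih
    have hcast : ((L+1 : ℕ) : ℤ) = (L:ℤ)+1 := by push_cast; ring
    have hprod : (∏ k ∈ Finset.Icc 1 (L+1), (1 + T (2*(k:ℤ)-1)) : LaurentPolynomial ℤ)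
        = (∏ k ∈ Finset.Icc 1 L, (1 + T (2*(k:ℤ)-1))) * (1 + T (2*(L:ℤ)+1)) := by
      rw [Finset.prod_Icc_succ_top (by omega)]
      congr 2
      rw [hcast]; ring_nf
    constructor
    · rw [hcast, hprod,
        show (2*((L:ℤ)+1)+1) = 2*(L:ℤ)+3 by ring,
        show (-((L:ℤ)+1)-3) = -(L:ℤ)-4 by ring,
        show ((L:ℤ)+1+3) = (L:ℤ)+4 by ring,
        sum_Gt_congr 2 0 (by omega) (by omega) (by omega) (by omega)
          (lo' := -(L:ℤ)-3) (hi' := (L:ℤ)+3),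
        R1 L, ih1, ih2]
      have m : (T (2*(L:ℤ)+2) : LaurentPolynomial ℤ) * T (L:ℤ)
          = T ((L:ℤ)+1) * T (2*(L:ℤ)+1) := by
        rw [← T_add, ← T_add]; congr 1; ring
      set P : LaurentPolynomial ℤ := ∏ k ∈ Finset.Icc 1 L, (1 + T (2*(k:ℤ)-1)) with hP
      linear_combination P * m
    · rw [hcast, hprod,
        show (2*((L:ℤ)+1)+1) = 2*(L:ℤ)+3 by ring,
        show (-((L:ℤ)+1)-3) = -(L:ℤ)-4 by ring,
        show ((L:ℤ)+1+3) = (L:ℤ)+4 by ring,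
        show ((L:ℤ)+1+1) = (L:ℤ)+2 by ring,
        sum_Gt_congr 0 0 (by omega) (by omega) (by omega) (by omega)
          (lo' := -(L:ℤ)-3) (hi' := (L:ℤ)+3),
        R2 L, ih1, ih2]
      have m1' : (T ((L:ℤ)+2) : LaurentPolynomial ℤ) * T (L:ℤ) = T (2*(L:ℤ)+2) := by
        rw [← T_add]; congr 1; ring
      have m2' : (T ((L:ℤ)+1) : LaurentPolynomial ℤ) * T (L:ℤ) = T (2*(L:ℤ)+1) := by
        rw [← T_add]; congr 1; ring
      set P : LaurentPolynomial ℤ := ∏ k ∈ Finset.Icc 1 L, (1 + T (2*(k:ℤ)-1)) with hP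
      linear_combination P * m2' - P * m1'

theorem stmt2 (L : ℕ) :
    (∑ᶠ j : ℤ, m1 j * T (2 * j ^ 2 + 2 * j) * qbin (T 1) (2 * L + 1) (L - 2 * j)) =
      T L * ∏ k ∈ Finset.Icc 1 L, (1 + T (2 * (k : ℤ) - 1)) := by
  have hsupp : Function.support
      (fun j : ℤ => m1 j * T (2 * j ^ 2 + 2 * j) * qbin (T 1) (2 * L + 1) (L - 2 * j))
        ⊆ (Finset.Icc (-(L:ℤ)-3) ((L:ℤ)+3) : Finset ℤ) := by
    intro j hj
    simp only [Finset.coe_Icc, Set.mem_Icc]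
    by_contra hj'
    apply hj
    have : qbin (T 1) (2 * (L:ℤ) + 1) ((L:ℤ) - 2 * j) = 0 := by
      rcases (by omega : (L:ℤ) - 2*j < 0 ∨ 2*(L:ℤ)+1 < (L:ℤ) - 2*j) with h | h
      · exact qbin_neg_right _ _ _ h
      · exact qbin_of_gt _ _ _ h
    simp [this]
  rw [finsum_eq_sum_of_support_subset _ hsupp]
  rw [Finset.sum_congr rfl (fun j _ => show
      m1 j * T (2 * j ^ 2 + 2 * j) * qbin (T 1) (2 * L + 1) ((L:ℤ) - 2 * j)
        = Gt (2*(L:ℤ)+1) 2 0 (L:ℤ) j by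
    rw [Gt, show 2*j^2 + 2*j + 0 = 2*j^2+2*j by ring])]
  exact (key L).1
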